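/- arXiv:0708.0909 — 2 statements merged into one kernel-verified Lean document; each statement's English description precedes it below -/
import Mathlib

section
/- Let m ≥ 1 and consider the cycle network on node set ZMod (2*m), with uniform port labeling: at every node, port 0 leads to the clockwise neighbor (node x + 1) and port 1 leads to the counterclockwise neighbor (node x − 1); an agent exiting a node through port 0 arrives at the next node through that node's port 1, and an agent exiting through port 1 arrives through port 0. Let S be the type of agent states and W the type of whiteboard contents, and let A : S × W × Fin 2 → S × W × Fin 2 be the agents' common deterministic algorithm: given its current state, the whiteboard of its current node, and its incoming port, an agent produces its new state, the new whiteboard content for its current node, and its outgoing port. A configuration consists of positions p : Fin 2 → ZMod (2*m), states st : Fin 2 → S, incoming ports q : Fin 2 → Fin 2, and whiteboards w : ZMod (2*m) → W; the synchronous step applies A simultaneously to both agents, updating each agent's state, the whiteboard at its current node, its position (to p i + 1 if the outgoing port is 0, to p i − 1 if it is 1), and its incoming port (to the port opposite its outgoing port). Then: if initially the two agents are antipodal (p 1 = p 0 + m), have equal states (st 0 = st 1) and equal incoming ports (q 0 = q 1), and the whiteboards are antipodally symmetric (w (x + m) = w x for all x), then after every number n of synchronous steps these four conditions still hold. In particular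 the two agents occupy distinct nodes and have equal states at every step, so for any identifier function id : S → ℕ the agents' identifiers are always equal and naming is never achieved, and for any predicate leader : S → Prop it never holds that exactly one agent satisfies leader. -/
/-- A configuration of the cycle network on `ZMod (2*m)` with two agents: each agent
has a position, a state, and an incoming port (in `Fin 2`), and each node has a
whiteboard. -/
abbrev CycleConfig (m : ℕ) (S W : Type*) :=
  (Fin 2 → ZMod (2 * m)) × (Fin 2 → S) × (Fin 2 → Fin 2) × (ZMod (2 * m) → W)

/-- The synchronous step of two deterministic identical agents on the cycle
`ZMod (2*m)` with uniform port labeling (port `0` leads clockwise to `x + 1`,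
port `1` leads counterclockwise to `x - 1`, and an agent exiting through port `0`
arrives through port `1` and vice versa), running the common algorithm
`A : S × W × Fin 2 → S × W × Fin 2` which maps (state, whiteboard, incoming port)
to (new state, new whiteboard content, outgoing port). -/
def cycleStep {m : ℕ} {S W : Type*} (A : S × W × Fin 2 → S × W × Fin 2)
    (c : CycleConfig m S W) : CycleConfig m S W :=
  let p := c.1
  let st := c.2.1
  let q := c.2.2.1
  let w := c.2.2.2
  ( fun i => if (A (st i, w (p i), q i)).2.2 = 0 then p i + 1 else p i - 1,
    fun i => (A (st i, w (p i), q i)).1,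
    fun i => if (A (st i, w (p i), q i)).2.2 = 0 then 1 else 0,
    fun x =>
      if p 0 = x then (A (st 0, w x, q 0)).2.1
      else if p 1 = x then (A (st 1, w x, q 1)).2.1
      else w x )


section Aux

variable {m : ℕ} {S W : Type*}

lemma m_ne_zero (hm : 1 ≤ m) : (m : ZMod (2 * m)) ≠ 0 := by
  have h2m : 2 * m ≠ 0 := by omega
  haveI : NeZero (2 * m) := ⟨h2m⟩
  intro h
  rw [ZMod.natCast_eq_zero_iff] at h
  have := Nat.le_of_dvd (by omega) h
  omega

lemma mm_zero : (m : ZMod (2 * m)) + (m : ZMod (2 * m)) = 0 := by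
  rw [← Nat.cast_add, ← two_mul, ZMod.natCast_self]

lemma inv_step (hm : 1 ≤ m) (A : S × W × Fin 2 → S × W × Fin 2)
    (c : CycleConfig m S W)
    (hp : c.1 1 = c.1 0 + (m : ZMod (2 * m))) (hst : c.2.1 0 = c.2.1 1)
    (hq : c.2.2.1 0 = c.2.2.1 1)
    (hw : ∀ x : ZMod (2 * m), c.2.2.2 (x + (m : ZMod (2 * m))) = c.2.2.2 x) :
    (cycleStep A c).1 1 = (cycleStep A c).1 0 + (m : ZMod (2 * m)) ∧
    (cycleStep A c).2.1 0 = (cycleStep A c).2.1 1 ∧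
    (cycleStep A c).2.2.1 0 = (cycleStep A c).2.2.1 1 ∧
    (∀ x : ZMod (2 * m),
      (cycleStep A c).2.2.2 (x + (m : ZMod (2 * m))) = (cycleStep A c).2.2.2 x) := by
  obtain ⟨p, st, q, w⟩ := c
  simp only at hp hst hq hw
  have hM : (m : ZMod (2 * m)) ≠ 0 := m_ne_zero hm
  have hkey : (st 1, w (p 1), q 1) = (st 0, w (p 0), q 0) := by
    rw [hp, hw, ← hst, ← hq]
  refine ⟨?_, ?_, ?_, ?_⟩
  · simp only [cycleStep, hkey]
    split <;> rw [hp] <;> ring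
  · simp only [cycleStep, hkey]
  · simp only [cycleStep, hkey]
  · intro x
    simp only [cycleStep]
    have h01 : p 1 = p 0 + (m : ZMod (2 * m)) := hp
    by_cases h0 : p 0 = x
    · have hne : ¬ p 0 = x + (m : ZMod (2 * m)) := by
        rw [h0]; intro h
        exact hM (by linear_combination -h)
      have h1 : p 1 = x + (m : ZMod (2 * m)) := by rw [h01, h0]
      rw [if_neg hne, if_pos h1, if_pos h0, hw, ← hst, ← hq]
    · by_cases h1 : p 1 = x
      · have h0' : p 0 = x + (m : ZMod (2 * m)) := by
          rw [← h1, h01]; linear_combination -mm_zero (m := m)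
        rw [if_pos h0', if_neg h0, if_pos h1, hw, hst, hq]
      · have hn0 : ¬ p 0 = x + (m : ZMod (2 * m)) := by
          intro h; apply h1
          rw [h01, h]; linear_combination mm_zero (m := m)
        have hn1 : ¬ p 1 = x + (m : ZMod (2 * m)) := by
          intro h; apply h0
          rw [h01] at h; linear_combination h
        rw [if_neg hn0, if_neg hn1, if_neg h0, if_neg h1, hw]

end Aux

/-- Impossibility of deterministic naming and leader election on a cycle of even
length `2*m`: if the two identical agents start at antipodal nodes with equal states
and equal incoming ports, and the whiteboards are antipodally symmetric, then these
conditions persist after every number of synchronous steps; in particular the agents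
always occupy distinct nodes and have equal states, their identifiers are always
equal, and it never holds that exactly one agent is leader. -/
theorem cycle_impossibility {m : ℕ} (hm : 1 ≤ m) {S W : Type*}
    (A : S × W × Fin 2 → S × W × Fin 2)
    (p : Fin 2 → ZMod (2 * m)) (st : Fin 2 → S) (q : Fin 2 → Fin 2)
    (w : ZMod (2 * m) → W)
    (hp : p 1 = p 0 + (m : ZMod (2 * m))) (hst : st 0 = st 1) (hq : q 0 = q 1)
    (hw : ∀ x : ZMod (2 * m), w (x + (m : ZMod (2 * m))) = w x) :
    ∀ n : ℕ,
      ((cycleStep A)^[n] (p, st, q, w)).1 1 =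
          ((cycleStep A)^[n] (p, st, q, w)).1 0 + (m : ZMod (2 * m)) ∧
      ((cycleStep A)^[n] (p, st, q, w)).2.1 0 = ((cycleStep A)^[n] (p, st, q, w)).2.1 1 ∧
      ((cycleStep A)^[n] (p, st, q, w)).2.2.1 0 = ((cycleStep A)^[n] (p, st, q, w)).2.2.1 1 ∧
      (∀ x : ZMod (2 * m),
        ((cycleStep A)^[n] (p, st, q, w)).2.2.2 (x + (m : ZMod (2 * m))) =
          ((cycleStep A)^[n] (p, st, q, w)).2.2.2 x) ∧
      ((cycleStep A)^[n] (p, st, q, w)).1 0 ≠ ((cycleStep A)^[n] (p, st, q, w)).1 1 ∧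
      (∀ id : S → ℕ,
        id (((cycleStep A)^[n] (p, st, q, w)).2.1 0) =
          id (((cycleStep A)^[n] (p, st, q, w)).2.1 1)) ∧
      (∀ leader : S → Prop,
        ¬ ∃! i : Fin 2, leader (((cycleStep A)^[n] (p, st, q, w)).2.1 i)) := by
  have main : ∀ n : ℕ,
      ((cycleStep A)^[n] (p, st, q, w)).1 1 =
          ((cycleStep A)^[n] (p, st, q, w)).1 0 + (m : ZMod (2 * m)) ∧
      ((cycleStep A)^[n] (p, st, q, w)).2.1 0 = ((cycleStep A)^[n] (p, st, q, w)).2.1 1 ∧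
      ((cycleStep A)^[n] (p, st, q, w)).2.2.1 0 = ((cycleStep A)^[n] (p, st, q, w)).2.2.1 1 ∧
      (∀ x : ZMod (2 * m),
        ((cycleStep A)^[n] (p, st, q, w)).2.2.2 (x + (m : ZMod (2 * m))) =
          ((cycleStep A)^[n] (p, st, q, w)).2.2.2 x) := by
    intro n
    induction n with
    | zero => exact ⟨hp, hst, hq, hw⟩
    | succ k ih =>
      rw [Function.iterate_succ_apply']
      exact inv_step hm A _ ih.1 ih.2.1 ih.2.2.1 ih.2.2.2
  intro n
  obtain ⟨h1, h2, h3, h4⟩ := main n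
  have hM : (m : ZMod (2 * m)) ≠ 0 := m_ne_zero hm
  refine ⟨h1, h2, h3, h4, ?_, fun id => by rw [h2], ?_⟩
  · intro h
    exact hM (by linear_combination -h1 - h)
  · rintro leader ⟨i, hi, hu⟩
    have hL0 : leader (((cycleStep A)^[n] (p, st, q, w)).2.1 0) := by
      fin_cases i
      · exact hi
      · rw [h2]; exact hi
    have hL1 : leader (((cycleStep A)^[n] (p, st, q, w)).2.1 1) := by rw [← h2]; exact hL0
    exact absurd ((hu 0 hL0).trans (hu 1 hL1).symm) (by decide)
end

section
/- Let G be a finite tree (a connected acyclic simple graph) on n vertices, with n ≥ 2. For each vertex v, fix a bijection port_v from the neighbors of v to Fin (deg v), where deg v is the degree of v. Define the next-port (Eulerian traversal) map T on the darts of G (ordered pairs (u, v) of adjacent vertices) by: T (u, v) = (v, w), where w is the unique neighbor of v with port_v w = port_v u + 1 (mod deg v). Then T is a permutation of the set of darts of G, this set has exactly 2*(n − 1) elements, and T acts on it as a single cycle: for any two darts d and d' there exists k < 2*(n − 1) with T^[k] d = d'. -/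
/-!
From a dart `(u, v)` the next-port map leaves `v` through the ports following that of `u`, in
cyclic order. In an acyclic graph each such dart `(v, w)` enters a branch strictly smaller than
the one entered by `(u, v)`, so by induction on the branch size the orbit comes back along
`(w, v)` before taking the next port, and finally returns along `(v, u)`. Hence the orbit of a
dart contains every dart leaving its head, and in a connected graph every dart. Reaching every
dart from every dart makes the map surjective, hence bijective on the finite set of darts, and a
point of a finite orbit is reached in fewer steps than the number of darts, `2 * #edges`.
-/

open SimpleGraph Function

/-- The next-port (Eulerian traversal) map on the darts of a locally finite graph:
a dart `(u, v)` is mapped to `(v, w)` where `w` is the unique neighbor of `v` whose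
local port label at `v` is one more (mod `deg v`) than the port label of `u` at `v`.
Here `port v` is a fixed bijection from the neighbors of `v` to `Fin (deg v)`. -/
def nextDart {V : Type*} [Fintype V] [DecidableEq V] (G : SimpleGraph V)
    [DecidableRel G.Adj] (port : ∀ v : V, G.neighborSet v ≃ Fin (G.degree v))
    (d : G.Dart) : G.Dart :=
  let v := d.toProd.2
  let i : Fin (G.degree v) := port v ⟨d.toProd.1, d.adj.symm⟩
  let j : Fin (G.degree v) := ⟨(i.val + 1) % G.degree v, Nat.mod_lt _ i.pos⟩
  let w := (port v).symm j
  ⟨(v, w.1), w.2⟩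

theorem Function.exists_iterate_eq_trans {α : Type*} {f : α → α} {x y z : α}
    (hxy : ∃ k, f^[k] x = y) (hyz : ∃ k, f^[k] y = z) : ∃ k, f^[k] x = z := by
  obtain ⟨k, rfl⟩ := hxy
  obtain ⟨l, rfl⟩ := hyz
  exact ⟨l + k, iterate_add_apply f l k x⟩

theorem Function.surjective_of_forall_exists_iterate_eq {α : Type*} {f : α → α}
    (h : ∀ x y, ∃ k, f^[k] x = y) : Surjective f := fun y => by
  obtain ⟨k, hk⟩ := h (f y) y
  exact ⟨f^[k] y, by rw [← iterate_succ_apply' f k y, iterate_succ_apply, hk]⟩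

theorem Function.Injective.exists_iterate_eq_lt_card {α : Type*} [Fintype α] {f : α → α}
    (hf : Injective f) {x y : α} (h : ∃ k, f^[k] x = y) :
    ∃ k < Fintype.card α, f^[k] x = y := by
  obtain ⟨k, rfl⟩ := h
  have hpos := minimalPeriod_pos_of_mem_periodicPts (hf.mem_periodicPts x)
  exact ⟨k % minimalPeriod f x, (Nat.mod_lt k hpos).trans_le minimalPeriod_le_card,
    iterate_mod_minimalPeriod_eq⟩

namespace SimpleGraph

section FarSide

variable {V : Type*} {G : SimpleGraph V}

/-- In an acyclic graph, the branch entered by `d`. -/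
def Dart.farSide (d : G.Dart) : Set V := {x | ∃ p : G.Walk d.snd x, d.edge ∉ p.edges}

theorem Dart.snd_mem_farSide (d : G.Dart) : d.snd ∈ d.farSide := ⟨Walk.nil, by simp⟩

theorem Dart.fst_notMem_farSide (hG : G.IsAcyclic) (d : G.Dart) : d.fst ∉ d.farSide := by
  rintro ⟨p, hp⟩
  have hbridge := isBridge_iff_forall_walk_mem_edges.mp
    (isAcyclic_iff_forall_adj_isBridge.mp hG d.adj) p.reverse
  rw [Walk.edges_reverse, List.mem_reverse] at hbridge
  exact hp hbridge

theorem Dart.farSide_ssubset (hG : G.IsAcyclic) {d e : G.Dart} (hde : G.DartAdj d e)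
    (hne : e.snd ≠ d.fst) : e.farSide ⊂ d.farSide := by
  classical
  refine ⟨?_, fun h => e.fst_notMem_farSide hG (hde ▸ h d.snd_mem_farSide)⟩
  obtain ⟨⟨u, v⟩, huv⟩ := d
  obtain ⟨⟨v', w⟩, hvw⟩ := e
  obtain rfl : v = v' := hde
  have hedge : s(u, v) ≠ s(v, w) := by
    simp only [ne_eq, Sym2.eq_iff, not_or, not_and]
    exact ⟨fun h => absurd h huv.ne, fun h => absurd h.symm hne⟩
  rintro x ⟨p, hp⟩
  -- a walk from `w` back to `u` would close a cycle through `u`, `v` and `w`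
  have hu : u ∉ p.support := fun hu =>
    Dart.fst_notMem_farSide hG ⟨(v, w), hvw⟩ ⟨(p.takeUntil u hu).concat huv, by
      simpa [Walk.edges_concat, hedge.symm] using
        fun h => hp (p.edges_takeUntil_subset_edges hu h)⟩
  refine ⟨Walk.cons hvw p, ?_⟩
  simpa [Walk.edges_cons, hedge] using fun h => hu (p.fst_mem_support_of_mem_edges h)

end FarSide

section PortSucc

variable {V : Type*} [Fintype V] {G : SimpleGraph V} [DecidableRel G.Adj]
  {port : ∀ v : V, G.neighborSet v ≃ Fin (G.degree v)}

variable (port) in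
def portSucc (v : V) (x : G.neighborSet v) : G.neighborSet v :=
  (port v).symm ⟨((port v x).val + 1) % G.degree v, Nat.mod_lt _ (port v x).pos⟩

theorem val_port_portSucc_iterate (v : V) (x : G.neighborSet v) (t : ℕ) :
    (port v ((portSucc port v)^[t] x)).val = ((port v x).val + t) % G.degree v := by
  induction t with
  | zero => simp [Nat.mod_eq_of_lt (port v x).isLt]
  | succ t ih =>
    rw [iterate_succ_apply', portSucc, Equiv.apply_symm_apply, Fin.val_mk, ih, Nat.mod_add_mod,
      add_assoc]

theorem isPeriodicPt_portSucc_degree (v : V) (x : G.neighborSet v) :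
    IsPeriodicPt (portSucc port v) (G.degree v) x :=
  (port v).injective <| Fin.ext <| by
    rw [val_port_portSucc_iterate, Nat.add_mod_right, Nat.mod_eq_of_lt (port v x).isLt]

theorem exists_portSucc_iterate_eq (v : V) (x y : G.neighborSet v) :
    ∃ t, (portSucc port v)^[t] x = y := by
  refine ⟨(port v y).val + G.degree v - (port v x).val, (port v).injective (Fin.ext ?_)⟩
  have := (port v x).isLt
  rw [val_port_portSucc_iterate, Nat.add_sub_of_le (by omega), Nat.add_mod_right,
    Nat.mod_eq_of_lt (port v y).isLt]

end PortSucc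

section NextDart

variable {V : Type*} [Fintype V] [DecidableEq V] {G : SimpleGraph V} [DecidableRel G.Adj]
  {port : ∀ v : V, G.neighborSet v ≃ Fin (G.degree v)}

theorem nextDart_symm_dartOfNeighborSet (v : V) (x : G.neighborSet v) :
    nextDart G port (G.dartOfNeighborSet v x).symm = G.dartOfNeighborSet v (portSucc port v x) :=
  rfl

theorem exists_nextDart_iterate_eq_symm (hG : G.IsAcyclic) (d : G.Dart) :
    ∃ k, (nextDart G port)^[k] d = d.symm := by
  induction d using (measure fun d : G.Dart => d.farSide.ncard).wf.induction with
  | _ d ih =>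
  set x₀ : G.neighborSet d.snd := ⟨d.fst, d.adj.symm⟩
  set r := portSucc port d.snd
  -- the ports after that of `d.fst` lead into smaller branches, from which the orbit returns
  have hleave : ∀ s, 0 < s → s ≤ minimalPeriod r x₀ →
      ∃ k, (nextDart G port)^[k] d = G.dartOfNeighborSet d.snd (r^[s] x₀) := by
    intro s hs hsp
    induction s, hs using Nat.le_induction with
    | base => exact ⟨1, rfl⟩
    | succ s hs ihs =>
      obtain ⟨k, hk⟩ := ihs (by omega)
      set e := G.dartOfNeighborSet d.snd (r^[s] x₀)
      have hne : e.snd ≠ d.fst := fun h =>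
        not_isPeriodicPt_of_pos_of_lt_minimalPeriod (by omega) (by omega) (Subtype.ext h)
      obtain ⟨l, hl⟩ := ih e (Set.ncard_lt_ncard (Dart.farSide_ssubset hG rfl hne))
      refine ⟨1 + l + k, ?_⟩
      rw [iterate_add_apply, iterate_add_apply, hk, hl, iterate_one,
        nextDart_symm_dartOfNeighborSet, iterate_succ_apply']
  have hpos :=
    (isPeriodicPt_portSucc_degree (port := port) d.snd x₀).minimalPeriod_pos (port _ x₀).pos
  obtain ⟨k, hk⟩ := hleave _ hpos le_rfl
  exact ⟨k, by rw [hk, (isPeriodicPt_minimalPeriod r x₀).eq]; rfl⟩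

theorem exists_nextDart_iterate_dartOfNeighborSet (hG : G.IsAcyclic) (v : V)
    (x y : G.neighborSet v) :
    ∃ k, (nextDart G port)^[k] (G.dartOfNeighborSet v x) = G.dartOfNeighborSet v y := by
  obtain ⟨t, rfl⟩ := exists_portSucc_iterate_eq (port := port) v x y
  induction t with
  | zero => exact ⟨0, rfl⟩
  | succ t ih =>
    refine exists_iterate_eq_trans ih ?_
    obtain ⟨k, hk⟩ := exists_nextDart_iterate_eq_symm (port := port) hG
      (G.dartOfNeighborSet v ((portSucc port v)^[t] x))
    exact ⟨k + 1, by rw [iterate_succ_apply', hk, nextDart_symm_dartOfNeighborSet,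
      iterate_succ_apply']⟩

theorem exists_nextDart_iterate_eq_of_dartAdj (hG : G.IsAcyclic) {d e : G.Dart}
    (hde : G.DartAdj d e) : ∃ k, (nextDart G port)^[k] d = e := by
  obtain ⟨⟨u, v⟩, huv⟩ := d
  obtain ⟨⟨v', w⟩, hvw⟩ := e
  obtain rfl : v = v' := hde
  exact exists_iterate_eq_trans ⟨1, rfl⟩
    (exists_nextDart_iterate_dartOfNeighborSet hG v _ ⟨w, hvw⟩)

theorem exists_nextDart_iterate_eq_of_walk (hG : G.IsAcyclic) {a b : V} (p : G.Walk a b) :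
    ∀ d e : G.Dart, d.snd = a → e.fst = b → ∃ k, (nextDart G port)^[k] d = e := by
  induction p with
  | nil => exact fun d e hd he => exists_nextDart_iterate_eq_of_dartAdj hG (hd.trans he.symm)
  | cons hab q ih =>
    exact fun d e hd he => exists_iterate_eq_trans
      (exists_nextDart_iterate_eq_of_dartAdj (e := ⟨(_, _), hab⟩) hG hd) (ih _ e rfl he)

theorem IsTree.exists_nextDart_iterate_eq (hG : G.IsTree) (d e : G.Dart) :
    ∃ k, (nextDart G port)^[k] d = e :=
  exists_nextDart_iterate_eq_of_walk hG.isAcyclic (hG.1.preconnected d.snd e.fst).some d e rfl rfl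

end NextDart

end SimpleGraph

theorem tree_nextDart_single_cycle_general {V : Type*} [Fintype V] [DecidableEq V]
    (G : SimpleGraph V) [DecidableRel G.Adj] (hG : G.IsTree)
    (port : ∀ v : V, G.neighborSet v ≃ Fin (G.degree v)) :
    Function.Bijective (nextDart G port) ∧
      Fintype.card G.Dart = 2 * (Fintype.card V - 1) ∧
      ∀ d d' : G.Dart, ∃ k < 2 * (Fintype.card V - 1),
        (nextDart G port)^[k] d = d' := by
  have hreach := hG.exists_nextDart_iterate_eq (port := port)
  have hsurj := surjective_of_forall_exists_iterate_eq hreach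
  have hinj := Finite.injective_iff_surjective.mpr hsurj
  have hcard : Fintype.card G.Dart = 2 * (Fintype.card V - 1) := by
    have := hG.card_edgeFinset
    rw [G.dart_card_eq_twice_card_edges]
    omega
  exact ⟨⟨hinj, hsurj⟩, hcard,
    fun d d' => hcard ▸ hinj.exists_iterate_eq_lt_card (hreach d d')⟩

/-- In a finite tree on `n ≥ 2` vertices, the next-port map is a permutation of the
set of darts, this set has exactly `2*(n-1)` elements, and the next-port map acts on
it as a single cycle. -/
theorem tree_nextDart_single_cycle {V : Type*} [Fintype V] [DecidableEq V]
    (G : SimpleGraph V) [DecidableRel G.Adj] (hG : G.IsTree)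
    (hn : 2 ≤ Fintype.card V)
    (port : ∀ v : V, G.neighborSet v ≃ Fin (G.degree v)) :
    Function.Bijective (nextDart G port) ∧
      Fintype.card G.Dart = 2 * (Fintype.card V - 1) ∧
      ∀ d d' : G.Dart, ∃ k < 2 * (Fintype.card V - 1),
        (nextDart G port)^[k] d = d' :=
  tree_nextDart_single_cycle_general G hG port
end
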